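/- arXiv:2604.25681 — 2 statements merged into one kernel-verified Lean document; each statement's English description precedes it below -/
import Mathlib

section
/- With median-of-three pivot selection from m ≥ 3 distinct elements (three samples uniform without replacement, pivot = median of the three), the probability that the pivot's rank X satisfies m/4 ≤ X ≤ 3m/4 is at least 1/2. -/
/-!
A 3-subset of `B` has median `y` exactly when it consists of `y`, one element below `y` and one
above, so the median has rank `k` in exactly `k * (m - 1 - k)` of the `m.choose 3` subsets. The
claim is thus that the ranks in `[m/4, 3m/4]` carry at least half of the total weight
`∑ k, k * (m - 1 - k)`. The weight is symmetric and unimodal, and the outer ranks can be matched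
injectively with central ranks of at least the same weight.
-/

open Finset

section MedianRank

variable {α : Type*} [LinearOrder α]

lemma strictMonoOn_card_filter_lt (T : Finset α) :
    StrictMonoOn (fun y => #{x ∈ T | x < y}) T := by
  intro y hy z _ hyz
  refine card_lt_card ((ssubset_iff_of_subset ?_).2 ⟨y, mem_filter.2 ⟨hy, hyz⟩, by simp⟩)
  exact monotone_filter_right _ fun x _ hxy => hxy.trans hyz

lemma image_card_filter_lt (T : Finset α) :
    T.image (fun y => #{x ∈ T | x < y}) = range #T := by
  refine eq_of_subset_of_card_le (fun k hk => ?_) ?_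
  · obtain ⟨y, hy, rfl⟩ := mem_image.1 hk
    exact mem_range.2 (card_lt_card (filter_ssubset.2 ⟨y, hy, lt_irrefl y⟩))
  · rw [card_range, card_image_of_injOn (strictMonoOn_card_filter_lt T).injOn]

lemma insert_filter_lt_union_filter_gt {T : Finset α} {y : α} (hy : y ∈ T) :
    insert y ({x ∈ T | x < y} ∪ {x ∈ T | y < x}) = T := by
  ext x
  simp only [mem_insert, mem_union, mem_filter]
  rcases lt_trichotomy x y with h | rfl | h <;> grind

lemma card_filter_lt_add_card_filter_gt {T : Finset α} {y : α} (hy : y ∈ T) :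
    #{x ∈ T | x < y} + #{x ∈ T | y < x} + 1 = #T := by
  conv_rhs => rw [← insert_filter_lt_union_filter_gt hy]
  rw [card_insert_of_notMem (by simp), card_union_of_disjoint]
  exact disjoint_filter.2 fun x _ h₁ h₂ => lt_asymm h₁ h₂

lemma existsUnique_card_filter_lt_eq {T : Finset α} {k : ℕ} (hk : k < #T) :
    ∃! y, y ∈ T ∧ #{x ∈ T | x < y} = k := by
  obtain ⟨y, hy, rfl⟩ := mem_image.1 ((image_card_filter_lt T).symm ▸ mem_range.2 hk)
  exact ⟨y, ⟨hy, rfl⟩, fun z hz => (strictMonoOn_card_filter_lt T).injOn hz.1 hy hz.2⟩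

section Triple

variable {a y c : α}

lemma filter_lt_triple (hay : a < y) (hyc : y < c) :
    {x ∈ ({a, y, c} : Finset α) | x < y} = {a} := by
  ext x
  simp only [mem_filter, mem_insert, mem_singleton]
  grind

lemma filter_gt_triple (hay : a < y) (hyc : y < c) :
    {x ∈ ({a, y, c} : Finset α) | y < x} = {c} := by
  ext x
  simp only [mem_filter, mem_insert, mem_singleton]
  grind

lemma card_triple (hay : a < y) (hyc : y < c) : #({a, y, c} : Finset α) = 3 := by
  rw [card_insert_of_notMem (by simp [hay.ne, (hay.trans hyc).ne]),
    card_pair hyc.ne]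

end Triple

def triplesWithMedian (B : Finset α) (y : α) : Finset (Finset α) :=
  {S ∈ B.powersetCard 3 | y ∈ S ∧ #{x ∈ S | x < y} = 1}

lemma triplesWithMedian_eq_image {B : Finset α} {y : α} (hy : y ∈ B) :
    triplesWithMedian B y =
      ({x ∈ B | x < y} ×ˢ {x ∈ B | y < x}).image fun p => {p.1, y, p.2} := by
  ext S
  simp only [triplesWithMedian, mem_filter, mem_powersetCard, mem_image, mem_product,
    Prod.exists]
  constructor
  · rintro ⟨⟨hSB, hS3⟩, hyS, hlt⟩
    have hgt : #{x ∈ S | y < x} = 1 := by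
      have := card_filter_lt_add_card_filter_gt hyS
      omega
    obtain ⟨a, ha⟩ := card_eq_one.1 hlt
    obtain ⟨c, hc⟩ := card_eq_one.1 hgt
    have haS : a ∈ S ∧ a < y := mem_filter.1 (ha ▸ mem_singleton_self a)
    have hcS : c ∈ S ∧ y < c := mem_filter.1 (hc ▸ mem_singleton_self c)
    refine ⟨a, c, ⟨⟨hSB haS.1, haS.2⟩, hSB hcS.1, hcS.2⟩, ?_⟩
    rw [← insert_filter_lt_union_filter_gt hyS, ha, hc, ← insert_eq, insert_comm]
  · rintro ⟨a, c, ⟨⟨haB, hay⟩, hcB, hyc⟩, rfl⟩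
    refine ⟨⟨?_, card_triple hay hyc⟩, by simp,
      by rw [filter_lt_triple hay hyc, card_singleton]⟩
    simp [insert_subset_iff, haB, hy, hcB]

lemma card_triplesWithMedian {B : Finset α} {y : α} (hy : y ∈ B) :
    #(triplesWithMedian B y) = #{x ∈ B | x < y} * #{x ∈ B | y < x} := by
  rw [triplesWithMedian_eq_image hy, card_image_of_injOn, card_product]
  rintro ⟨a, c⟩ hac ⟨a', c'⟩ hac' h
  simp only [coe_product, Set.mem_prod, coe_filter, Set.mem_ofPred_eq] at hac hac'
  have ha := congrArg (fun S : Finset α => ({x ∈ S | x < y} : Finset α)) h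
  have hc := congrArg (fun S : Finset α => ({x ∈ S | y < x} : Finset α)) h
  simp only [filter_lt_triple hac.1.2 hac.2.2, filter_lt_triple hac'.1.2 hac'.2.2,
    filter_gt_triple hac.1.2 hac.2.2, filter_gt_triple hac'.1.2 hac'.2.2,
    singleton_inj] at ha hc
  rw [ha, hc]

lemma filter_exists_median_eq_biUnion (B : Finset α) (p : α → Prop) [DecidablePred p] :
    {S ∈ B.powersetCard 3 | ∃ y ∈ S, #{x ∈ S | x < y} = 1 ∧ p y} =
      {y ∈ B | p y}.biUnion (triplesWithMedian B) := by
  ext S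
  simp only [mem_filter, mem_biUnion, triplesWithMedian, mem_powersetCard]
  constructor
  · rintro ⟨hS, y, hyS, hmed, hp⟩
    exact ⟨y, ⟨hS.1 hyS, hp⟩, hS, hyS, hmed⟩
  · rintro ⟨y, ⟨-, hp⟩, hS, hyS, hmed⟩
    exact ⟨hS, y, hyS, hmed, hp⟩

lemma pairwiseDisjoint_triplesWithMedian (B : Finset α) :
    (B : Set α).PairwiseDisjoint (triplesWithMedian B) := by
  intro y _ y' _ hne
  refine disjoint_left.2 fun S hS hS' => hne ?_
  simp only [triplesWithMedian, mem_filter, mem_powersetCard] at hS hS'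
  exact (existsUnique_card_filter_lt_eq (hS.1.2 ▸ by norm_num : 1 < #S)).unique hS.2 hS'.2

/-- Counting form of `P[X = k] = 6k(m-1-k)/(m(m-1)(m-2))`. -/
lemma card_filter_exists_median (B : Finset α) (p : ℕ → Prop) [DecidablePred p] :
    #{S ∈ B.powersetCard 3 | ∃ y ∈ S, #{x ∈ S | x < y} = 1 ∧ p #{x ∈ B | x < y}} =
      ∑ k ∈ range #B with p k, k * (#B - 1 - k) := by
  have hsub : ↑({y ∈ B | p #{x ∈ B | x < y}} : Finset α) ⊆ (B : Set α) :=
    coe_subset.2 (filter_subset _ _)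
  rw [filter_exists_median_eq_biUnion,
    card_biUnion ((pairwiseDisjoint_triplesWithMedian B).subset hsub), ← image_card_filter_lt B,
    filter_image, sum_image ((strictMonoOn_card_filter_lt B).injOn.mono hsub)]
  refine sum_congr rfl fun y hy => ?_
  have hyB := (mem_filter.1 hy).1
  have := card_filter_lt_add_card_filter_gt hyB
  rw [card_triplesWithMedian hyB]
  congr 1
  omega

lemma card_powersetCard_three_eq_sum (B : Finset α) :
    #(B.powersetCard 3) = ∑ k ∈ range #B, k * (#B - 1 - k) := by
  have h := card_filter_exists_median B fun _ => True
  rw [filter_true, filter_true_of_mem] at h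
  · exact h
  intro S hS
  obtain ⟨y, ⟨hy, hmed⟩, -⟩ :=
    existsUnique_card_filter_lt_eq ((mem_powersetCard.1 hS).2 ▸ by norm_num : 1 < #S)
  exact ⟨y, hy, hmed, trivial⟩

end MedianRank

lemma sum_le_sum_of_injOn {ι κ M : Type*} [AddCommMonoid M] [PartialOrder M]
    [IsOrderedAddMonoid M] {s : Finset ι} {t : Finset κ} {f : ι → M} {h : κ → M}
    (g : ι → κ) (hg : Set.MapsTo g s t) (hinj : Set.InjOn g s)
    (hle : ∀ i ∈ s, f i ≤ h (g i)) (hh : ∀ j ∈ t, 0 ≤ h j) : ∑ i ∈ s, f i ≤ ∑ j ∈ t, h j := by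
  classical
  calc ∑ i ∈ s, f i ≤ ∑ i ∈ s, h (g i) := sum_le_sum hle
    _ = ∑ j ∈ s.image g, h j := (sum_image hinj).symm
    _ ≤ ∑ j ∈ t, h j :=
      sum_le_sum_of_subset_of_nonneg (image_subset_iff.2 hg) fun j hj _ => hh j hj

lemma mul_tsub_le_mul_tsub_of_mem_uIcc {n k a : ℕ} (hk : k ≤ n)
    (ha : a ∈ Set.uIcc k (n - k)) :
    k * (n - k) ≤ a * (n - a) := by
  rcases Set.mem_uIcc.1 ha with ⟨h₁, h₂⟩ | ⟨h₁, h₂⟩ <;>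
  · have : a ≤ n := by omega
    zify [hk, this] at *
    nlinarith

/-- With `t = ⌈m/4⌉`, shifting an outer rank of nonzero weight by `t - 1` towards the centre is
injective, lands in the central ranks and does not decrease the weight. -/
lemma sum_filter_not_quartiles_le (m : ℕ) :
    ∑ k ∈ range m with ¬(m ≤ 4 * k ∧ 4 * k ≤ 3 * m), k * (m - 1 - k) ≤
      ∑ k ∈ range m with m ≤ 4 * k ∧ 4 * k ≤ 3 * m, k * (m - 1 - k) := by
  rw [← sum_filter_ne_zero]
  refine sum_le_sum_of_injOn
    (fun k => if 4 * k < m then k + (m + 3) / 4 - 1 else k + 1 - (m + 3) / 4) ?_ ?_ ?_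
    fun _ _ => Nat.zero_le _
  · intro k hk
    simp only [coe_filter, mem_filter, mem_range, Set.mem_ofPred_eq, ne_eq, mul_eq_zero,
      not_or] at hk ⊢
    split_ifs <;> omega
  · intro k hk k' hk' h
    simp only [coe_filter, mem_filter, mem_range, Set.mem_ofPred_eq, ne_eq, mul_eq_zero,
      not_or] at hk hk' h
    split_ifs at h <;> omega
  · intro k hk
    simp only [mem_filter, mem_range, ne_eq, mul_eq_zero, not_or] at hk
    refine mul_tsub_le_mul_tsub_of_mem_uIcc (by omega) (Set.mem_uIcc.2 ?_)
    split_ifs <;> omega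

lemma sum_range_le_two_mul_sum_filter_quartiles (m : ℕ) :
    ∑ k ∈ range m, k * (m - 1 - k) ≤
      2 * ∑ k ∈ range m with m ≤ 4 * k ∧ 4 * k ≤ 3 * m, k * (m - 1 - k) := by
  rw [← sum_filter_add_sum_filter_not (range m) (fun k => m ≤ 4 * k ∧ 4 * k ≤ 3 * m)]
  have := sum_filter_not_quartiles_le m
  omega

theorem median_of_three_balanced_split_general {α : Type*} [LinearOrder α]
    (B : Finset α) (m : ℕ) (hm : 3 ≤ m) (hB : B.card = m) :
    (1 : ℝ) / 2 ≤
      (((B.powersetCard 3).filter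
          (fun S => ∃ y ∈ S, (S.filter (· < y)).card = 1 ∧
            m ≤ 4 * (B.filter (· < y)).card ∧ 4 * (B.filter (· < y)).card ≤ 3 * m)).card : ℝ)
        / ((B.powersetCard 3).card : ℝ) := by
  subst hB
  have hpos : (0 : ℝ) < #(B.powersetCard 3) := by
    rw [card_powersetCard]
    exact_mod_cast Nat.choose_pos hm
  rw [le_div_iff₀ hpos, card_filter_exists_median B (fun k => #B ≤ 4 * k ∧ 4 * k ≤ 3 * #B),
    card_powersetCard_three_eq_sum, one_div, inv_mul_le_iff₀ two_pos]
  exact_mod_cast sum_range_le_two_mul_sum_filter_quartiles #B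

/-- Median-of-three pivots give a constant-factor split: with the pivot chosen
as the median of a uniformly random 3-element subset of `m ≥ 3` distinct
elements, the probability that the pivot's rank `X` (number of strictly
smaller elements) satisfies `m/4 ≤ X ≤ 3m/4` is at least `1/2`. -/
theorem median_of_three_balanced_split {α : Type*} [LinearOrder α] [DecidableEq α]
    (B : Finset α) (m : ℕ) (hm : 3 ≤ m) (hB : B.card = m) :
    (1 : ℝ) / 2 ≤
      (((B.powersetCard 3).filter
          (fun S => ∃ y ∈ S, (S.filter (· < y)).card = 1 ∧
            m ≤ 4 * (B.filter (· < y)).card ∧ 4 * (B.filter (· < y)).card ≤ 3 * m)).card : ℝ)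
        / ((B.powersetCard 3).card : ℝ) :=
  median_of_three_balanced_split_general B m hm hB
end

section
/- Let B be a multiset of m ≥ 2 copies of a single value p, with pivot chosen as one fixed copy at position i. If elements at positions j ≤ i move to the new bucket iff strictly smaller than p, and elements at positions j > i move iff ≤ p, then the new bucket receives exactly the m − i elements at positions after the pivot; in particular if the pivot position is chosen uniformly at random, the expected size of the new bucket is (m−1)/2, and the new bucket is a strict subset (the pivot stays), so partitioning strictly decreases the bottom bucket size. -/
/-- Handling of equal elements in the SimdQuickHeap: let the bucket consist of
`m ≥ 2` copies of a single value `p` at positions `1, …, m` and let the pivot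
be the copy at position `i`. Elements at positions `j ≤ i` move to the new
bucket iff strictly smaller than `p`, and elements at positions `j > i` move
iff `≤ p`. Then the new bucket receives exactly the `m − i` elements at
positions after the pivot, so it is a strict subset (`m - i < m`, the pivot
stays); and if the pivot position is uniform over `{1, …, m}`, the expected
size of the new bucket is `(m−1)/2`. -/
theorem equal_elements_partition {α : Type*} [LinearOrder α]
    (m : ℕ) (hm : 2 ≤ m) (p : α) (v : ℕ → α) (hv : ∀ j, 1 ≤ j → j ≤ m → v j = p)
    (i : ℕ) (hi1 : 1 ≤ i) (him : i ≤ m) :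
    ((Finset.Icc 1 m).filter
        (fun j => (j ≤ i ∧ v j < p) ∨ (i < j ∧ v j ≤ p))).card = m - i ∧
    m - i < m ∧
    (∑ i ∈ Finset.Icc 1 m, ((m - i : ℕ) : ℝ)) / (m : ℝ) = ((m : ℝ) - 1) / 2 := by
  refine ⟨?_, ?_, ?_⟩
  · have : (Finset.Icc 1 m).filter
        (fun j => (j ≤ i ∧ v j < p) ∨ (i < j ∧ v j ≤ p)) = Finset.Icc (i+1) m := by
      ext j
      simp only [Finset.mem_filter, Finset.mem_Icc]
      constructor
      · rintro ⟨⟨h1, h2⟩, h⟩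
        rcases h with ⟨hji, hlt⟩ | ⟨hij, _⟩
        · exact absurd hlt (by simp [hv j h1 h2])
        · exact ⟨hij, h2⟩
      · rintro ⟨h1, h2⟩
        have hi' : 1 ≤ j := le_trans (by omega) h1
        exact ⟨⟨hi', h2⟩, Or.inr ⟨by omega, le_of_eq (hv j hi' h2)⟩⟩
    rw [this, Nat.card_Icc]
    omega
  · omega
  · have hsum : ∑ i ∈ Finset.Icc 1 m, ((m - i : ℕ) : ℝ)
        = ((m * (m - 1) / 2 : ℕ) : ℝ) := by
      rw [← Nat.cast_sum]
      congr 1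
      rw [show Finset.Icc 1 m = Finset.Ico 1 (m + 1) by rw [Finset.Ico_add_one_right_eq_Icc],
        Finset.sum_Ico_eq_sum_range]
      have h2 : ∀ j ∈ Finset.range (m + 1 - 1), m - (1 + j) = m - 1 - j := fun j hj => by omega
      rw [Finset.sum_congr rfl h2]
      simp only [Nat.add_sub_cancel]
      rw [Finset.sum_range_reflect (fun j => j) m, Finset.sum_range_id]
    rw [hsum]
    have hm0 : (m : ℝ) ≠ 0 := by positivity
    have h2 : 2 ∣ m * (m - 1) := Nat.even_mul_pred_self m |>.two_dvd
    have : ((m * (m - 1) / 2 : ℕ) : ℝ) = (m : ℝ) * ((m : ℝ) - 1) / 2 := by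
      rw [Nat.cast_div h2 (by norm_num)]
      push_cast [Nat.cast_sub (by omega : 1 ≤ m)]
      ring
    rw [this]
    field_simp
end
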